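/- For every x ∈ X, the function t ↦ f_t(x) is continuous on [0,∞), and it is locally Lipschitz and locally semiconcave on (0,∞) (i.e. for every compact interval [a,b] ⊂ (0,∞) there is a constant C ≥ 0 such that t ↦ f_t(x) − C t² is concave on [a,b]); moreover for every t > 0 the left and right derivatives of s ↦ f_s(x) at t exist and satisfy (d⁻/dt) f_t(x) = −(D⁻_t(x))²/(2t²) and (d⁺/dt) f_t(x) = −(D⁺_t(x))²/(2t²). -/

import Mathlib

/-!
Setting: `(X, d)` is a complete length metric space, `f : X × X → ℝ` is lower
semicontinuous, bounded from below, and satisfies the reverse triangle inequality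
`f(x,z) ≥ f(x,y) + f(y,z)`.  For `t > 0` set `F(t,x;y) := f(x,y) + d(x,y)²/(2t)`,
`f_t(x) := inf_y F(t,x;y)`, and `f_0(x) := f(x,x)`.  `D⁺_t(x)` (resp. `D⁻_t(x)`)
is the largest (resp. smallest) value of `limsup_n d(x,y_n)` (resp. `liminf_n d(x,y_n)`)
among minimizing sequences `(y_n)` of `F(t,x;·)`.
-/

open Filter Topology Metric MeasureTheory
open scoped ENNReal NNReal

noncomputable section

/-- A metric space is a *length space* if the distance between any two points equals the
infimum of the lengths (total variations) of continuous curves joining them. -/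
def IsLengthSpace (X : Type*) [MetricSpace X] : Prop :=
  ∀ x y : X,
    ENNReal.ofReal (dist x y) =
      ⨅ γ : { γ : ℝ → X // ContinuousOn γ (Set.Icc 0 1) ∧ γ 0 = x ∧ γ 1 = y },
        eVariationOn γ.1 (Set.Icc 0 1)

variable {X : Type*} [MetricSpace X]

/-- `FH f t x y = f(x,y) + d(x,y)² / (2t)`. -/
def FH (f : X × X → ℝ) (t : ℝ) (x y : X) : ℝ :=
  f (x, y) + dist x y ^ 2 / (2 * t)

/-- `ft f t x = inf_y (f(x,y) + d(x,y)²/(2t))` for `t ≠ 0`, and `ft f 0 x = f(x,x)`. -/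
def ft (f : X × X → ℝ) (t : ℝ) (x : X) : ℝ :=
  if t = 0 then f (x, x) else ⨅ y : X, FH f t x y

/-- `y : ℕ → X` is a minimizing sequence for `F(t,x;·)`. -/
def MinSeq (f : X × X → ℝ) (t : ℝ) (x : X) (y : ℕ → X) : Prop :=
  Tendsto (fun n => FH f t x (y n)) atTop (𝓝 (ft f t x))

/-- `D⁺_t(x)`: the largest value of `limsup_n d(x, y_n)` among minimizing sequences. -/
def Dplus (f : X × X → ℝ) (t : ℝ) (x : X) : ℝ :=
  sSup { L : ℝ | ∃ y : ℕ → X, MinSeq f t x y ∧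
    Filter.limsup (fun n => dist x (y n)) atTop = L }

/-- `D⁻_t(x)`: the smallest value of `liminf_n d(x, y_n)` among minimizing sequences. -/
def Dminus (f : X × X → ℝ) (t : ℝ) (x : X) : ℝ :=
  sInf { L : ℝ | ∃ y : ℕ → X, MinSeq f t x y ∧
    Filter.liminf (fun n => dist x (y n)) atTop = L }

/-- Descending slope `|∂⁻ g|(x) = limsup_{y→x} (g(y) - g(x))⁻ / d(x,y)`, valued in `[0,∞]`. -/
def descSlope (g : X → ℝ) (x : X) : ℝ≥0∞ :=
  Filter.limsup (fun y => ENNReal.ofReal ((g x - g y) / dist x y)) (𝓝[≠] x)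

/-- The tilt `tilt(f)(x) = limsup_{y→x} (f(x,y))⁻ / d(x,y)`, valued in `[0,∞]`. -/
def tilt (f : X × X → ℝ) (x : X) : ℝ≥0∞ :=
  Filter.limsup (fun y => ENNReal.ofReal ((-f (x, y)) / dist x y)) (𝓝[≠] x)

/-!
Along minimizing sequences the identity `F(t,x;y) = F(s,x;y) + d(x,y)² (1/(2t) - 1/(2s))`
compares the problems at two times: for `0 < t < s` it gives
`D⁺_t² (1/(2t) - 1/(2s)) ≤ f_t(x) - f_s(x) ≤ D⁻_s² (1/(2t) - 1/(2s))`,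
i.e. the difference quotients of `t ↦ f_t(x)` lie between `-D⁻_s²/(2ts)` and `-D⁺_t²/(2ts)`.
Since near-minimizers stay in a bounded ball, this yields the local Lipschitz bound.
Near-minimizers at times `s_k → t` form a minimizing sequence at `t`, whence
`limsup_{s→t} D⁻_s ≤ D⁺_t` and `liminf_{s→t} D⁺_s ≥ D⁻_t`; squeezing the difference
quotients then gives both one-sided derivatives. Semiconcavity holds because
`t ↦ F(t,x;y) - C t²` is concave on `[a,b]` as soon as `d(x,y)² ≤ 2a³C`, and continuity at `0`
because near-minimizers converge to `x` as `t → 0`, where `f(x,·)` is lower semicontinuous.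
-/

theorem one_div_two_mul_sub {t s : ℝ} (ht : 0 < t) (hs : 0 < s) :
    1 / (2 * t) - 1 / (2 * s) = (s - t) / (2 * t * s) := by
  field_simp

theorem lipschitzOnWith_of_abs_slope_le {g : ℝ → ℝ} {S : Set ℝ} {K : ℝ≥0}
    (h : ∀ t ∈ S, ∀ s ∈ S, t < s → |slope g t s| ≤ K) : LipschitzOnWith K g S := by
  have key : ∀ t ∈ S, ∀ s ∈ S, t < s → dist (g s) (g t) ≤ K * dist s t :=
      fun t ht s hs hts => by
    have hslope := sub_smul_slope g t s
    rw [smul_eq_mul, vsub_eq_sub] at hslope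
    rw [Real.dist_eq, Real.dist_eq, ← hslope, abs_mul, mul_comm]
    exact mul_le_mul_of_nonneg_right (h t ht s hs hts) (abs_nonneg _)
  refine LipschitzOnWith.of_dist_le_mul fun t ht s hs => ?_
  rcases lt_trichotomy t s with hts | rfl | hst
  · rw [dist_comm, dist_comm t]
    exact key t ht s hs hts
  · simp
  · exact key s hs t ht hst

theorem concaveOn_div_sub_mul_sq {a d K : ℝ} (ha : 0 < a) (hd0 : 0 ≤ d)
    (hd : d ≤ 2 * a ^ 3 * K) : ConcaveOn ℝ (Set.Ici a) (fun t => d / (2 * t) - K * t ^ 2) := by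
  refine ⟨convex_Ici a, fun p (hp : a ≤ p) q (hq : a ≤ q) α β hα hβ hαβ => ?_⟩
  obtain rfl : β = 1 - α := by linarith
  have hp0 : 0 < p := ha.trans_le hp
  have hq0 : 0 < q := ha.trans_le hq
  set r := α * p + (1 - α) * q
  have hr0 : 0 < r := by nlinarith
  have hra : a ≤ r := by nlinarith
  have defect : α * (d / (2 * p) - K * p ^ 2) + (1 - α) * (d / (2 * q) - K * q ^ 2)
      - (d / (2 * r) - K * r ^ 2) = α * (1 - α) * (p - q) ^ 2 * (d / (2 * p * q * r) - K) := by
    field_simp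
    ring
  have hcoef : d / (2 * p * q * r) ≤ K := by
    have hK : 0 ≤ K := by nlinarith [pow_pos ha 3]
    have hpqr : a ^ 3 ≤ p * q * r := by
      calc a ^ 3 = a * a * a := by ring
        _ ≤ p * q * r := by gcongr
    rw [div_le_iff₀ (by positivity)]
    nlinarith [mul_le_mul_of_nonneg_left hpqr hK]
  simp only [smul_eq_mul]
  nlinarith [mul_nonpos_of_nonneg_of_nonpos
    (mul_nonneg (mul_nonneg hα hβ) (sq_nonneg (p - q))) (sub_nonpos.2 hcoef)]

theorem tendsto_neg_sq_div_two_mul {t : ℝ} {l : Filter ℝ} (hl : l ≤ 𝓝 t) (ht : t ≠ 0)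
    {u : ℝ → ℝ} {D : ℝ} (hu : Tendsto u l (𝓝 D)) :
    Tendsto (fun s => -(u s ^ 2 / (2 * t * s))) l (𝓝 (-(D ^ 2 / (2 * t ^ 2)))) := by
  have hden : Tendsto (fun s : ℝ => 2 * t * s) l (𝓝 (2 * t ^ 2)) := by
    rw [sq, ← mul_assoc]
    exact tendsto_const_nhds.mul (tendsto_id.mono_left hl)
  exact ((hu.pow 2).div hden (by positivity)).neg

section HopfLax

variable {f : X × X → ℝ} {x y : X} {C t s b : ℝ}

theorem ft_of_ne_zero (ht : t ≠ 0) : ft f t x = ⨅ y, FH f t x y := if_neg ht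

theorem bddBelow_range_FH (hC : ∀ p, C ≤ f p) (ht : 0 < t) :
    BddBelow (Set.range (FH f t x)) := by
  refine ⟨C, ?_⟩
  rintro _ ⟨y, rfl⟩
  have := hC (x, y)
  have : 0 ≤ dist x y ^ 2 / (2 * t) := by positivity
  unfold FH
  linarith

theorem ft_le_FH (hC : ∀ p, C ≤ f p) (ht : 0 < t) (y : X) : ft f t x ≤ FH f t x y := by
  rw [ft_of_ne_zero ht.ne']
  exact ciInf_le (bddBelow_range_FH hC ht) y

theorem ft_le_diag (hC : ∀ p, C ≤ f p) (ht : 0 < t) : ft f t x ≤ f (x, x) := by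
  simpa [FH] using ft_le_FH (x := x) hC ht x

theorem exists_FH_lt (ht : 0 < t) {ε : ℝ} (hε : 0 < ε) :
    ∃ y, FH f t x y < ft f t x + ε := by
  have : Nonempty X := ⟨x⟩
  rw [ft_of_ne_zero ht.ne'] at *
  exact exists_lt_of_ciInf_lt (lt_add_of_pos_right _ hε)

theorem FH_eq_FH_add (t s : ℝ) (y : X) :
    FH f t x y = FH f s x y + dist x y ^ 2 * (1 / (2 * t) - 1 / (2 * s)) := by
  unfold FH; ring

theorem sq_dist_le_of_FH_le (hC : ∀ p, C ≤ f p) (ht : 0 < t) (htb : t ≤ b)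
    (hy : FH f t x y ≤ ft f t x + 1) : dist x y ^ 2 ≤ 2 * b * (f (x, x) + 1 - C) := by
  have hfy : dist x y ^ 2 / (2 * t) ≤ f (x, x) + 1 - C := by
    have := ft_le_diag (x := x) hC ht
    have := hC (x, y)
    unfold FH at hy
    linarith
  have hxx : 0 ≤ f (x, x) + 1 - C := by linarith [hC (x, x)]
  calc dist x y ^ 2 ≤ 2 * t * (f (x, x) + 1 - C) := by
        rwa [div_le_iff₀ (by positivity), mul_comm] at hfy
    _ ≤ 2 * b * (f (x, x) + 1 - C) := by gcongr

theorem exists_minSeq (hC : ∀ p, C ≤ f p) (ht : 0 < t) : ∃ y, MinSeq f t x y := by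
  choose y hy using fun n : ℕ =>
    exists_FH_lt (f := f) (x := x) ht (Nat.one_div_pos_of_nat (n := n))
  refine ⟨y, tendsto_of_tendsto_of_tendsto_of_le_of_le tendsto_const_nhds ?_
    (fun n => ft_le_FH hC ht (y n)) (fun n => (hy n).le)⟩
  simpa using tendsto_const_nhds.add (tendsto_one_div_add_atTop_nhds_zero_nat (𝕜 := ℝ))

theorem isBoundedUnder_ge_dist (y : ℕ → X) :
    IsBoundedUnder (· ≥ ·) atTop (fun n => dist x (y n)) :=
  isBoundedUnder_of ⟨0, fun _ => dist_nonneg⟩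

namespace MinSeq

variable {y : ℕ → X}

theorem eventually_FH_lt (hy : MinSeq f t x y) {ε : ℝ} (hε : 0 < ε) :
    ∀ᶠ n in atTop, FH f t x (y n) < ft f t x + ε :=
  hy.eventually (eventually_lt_nhds (lt_add_of_pos_right _ hε))

theorem eventually_dist_le (hC : ∀ p, C ≤ f p) (ht : 0 < t) (htb : t ≤ b)
    (hy : MinSeq f t x y) :
    ∀ᶠ n in atTop, dist x (y n) ≤ √(2 * b * (f (x, x) + 1 - C)) :=
  (hy.eventually_FH_lt one_pos).mono fun _ hn =>
    Real.le_sqrt_of_sq_le (sq_dist_le_of_FH_le hC ht htb hn.le)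

theorem isBoundedUnder_le (hC : ∀ p, C ≤ f p) (ht : 0 < t) (hy : MinSeq f t x y) :
    IsBoundedUnder (· ≤ ·) atTop (fun n => dist x (y n)) :=
  ⟨_, hy.eventually_dist_le hC ht le_rfl⟩

theorem limsup_le (hC : ∀ p, C ≤ f p) (ht : 0 < t) (hy : MinSeq f t x y) :
    limsup (fun n => dist x (y n)) atTop ≤ √(2 * t * (f (x, x) + 1 - C)) :=
  limsup_le_of_le (isBoundedUnder_ge_dist y).isCoboundedUnder_le
    (hy.eventually_dist_le hC ht le_rfl)

theorem liminf_nonneg (hC : ∀ p, C ≤ f p) (ht : 0 < t) (hy : MinSeq f t x y) :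
    0 ≤ liminf (fun n => dist x (y n)) atTop :=
  le_liminf_of_le (hy.isBoundedUnder_le hC ht).isCoboundedUnder_ge
    (Eventually.of_forall fun _ => dist_nonneg)

end MinSeq

theorem limsup_le_Dplus (hC : ∀ p, C ≤ f p) (ht : 0 < t) {y : ℕ → X} (hy : MinSeq f t x y) :
    limsup (fun n => dist x (y n)) atTop ≤ Dplus f t x :=
  le_csSup ⟨_, by rintro _ ⟨y, hy, rfl⟩; exact hy.limsup_le hC ht⟩ ⟨y, hy, rfl⟩

theorem Dminus_le_liminf (hC : ∀ p, C ≤ f p) (ht : 0 < t) {y : ℕ → X}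
    (hy : MinSeq f t x y) :
    Dminus f t x ≤ liminf (fun n => dist x (y n)) atTop :=
  csInf_le ⟨0, by rintro _ ⟨y, hy, rfl⟩; exact hy.liminf_nonneg hC ht⟩ ⟨y, hy, rfl⟩

theorem exists_lt_limsup_of_lt_Dplus (hC : ∀ p, C ≤ f p) (ht : 0 < t) {ℓ : ℝ}
    (hℓ : ℓ < Dplus f t x) :
    ∃ y, MinSeq f t x y ∧ ℓ < limsup (fun n => dist x (y n)) atTop := by
  obtain ⟨y, hy⟩ := exists_minSeq (x := x) hC ht
  obtain ⟨_, ⟨y, hy, rfl⟩, hlt⟩ := exists_lt_of_lt_csSup (by exact ⟨_, y, hy, rfl⟩) hℓ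
  exact ⟨y, hy, hlt⟩

theorem exists_liminf_lt_of_Dminus_lt (hC : ∀ p, C ≤ f p) (ht : 0 < t) {ℓ : ℝ}
    (hℓ : Dminus f t x < ℓ) :
    ∃ y, MinSeq f t x y ∧ liminf (fun n => dist x (y n)) atTop < ℓ := by
  obtain ⟨y, hy⟩ := exists_minSeq (x := x) hC ht
  obtain ⟨_, ⟨y, hy, rfl⟩, hlt⟩ := exists_lt_of_csInf_lt (by exact ⟨_, y, hy, rfl⟩) hℓ
  exact ⟨y, hy, hlt⟩

theorem Dplus_nonneg (hC : ∀ p, C ≤ f p) (ht : 0 < t) : 0 ≤ Dplus f t x := by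
  obtain ⟨y, hy⟩ := exists_minSeq (x := x) hC ht
  exact (le_limsup_of_frequently_le (Frequently.of_forall fun _ => dist_nonneg)
    (hy.isBoundedUnder_le hC ht)).trans (limsup_le_Dplus hC ht hy)

theorem Dminus_nonneg (hC : ∀ p, C ≤ f p) (ht : 0 < t) : 0 ≤ Dminus f t x := by
  obtain ⟨y, hy⟩ := exists_minSeq (x := x) hC ht
  exact le_csInf ⟨_, y, hy, rfl⟩ (by rintro _ ⟨y, hy, rfl⟩; exact hy.liminf_nonneg hC ht)

theorem sq_Dminus_le (hC : ∀ p, C ≤ f p) (ht : 0 < t) (htb : t ≤ b) :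
    Dminus f t x ^ 2 ≤ 2 * b * (f (x, x) + 1 - C) := by
  obtain ⟨y, hy⟩ := exists_minSeq (x := x) hC ht
  have hK : 0 ≤ 2 * b * (f (x, x) + 1 - C) := by nlinarith [hC (x, x)]
  refine (Real.le_sqrt (Dminus_nonneg hC ht) hK).1 ((Dminus_le_liminf hC ht hy).trans ?_)
  exact liminf_le_of_frequently_le (hy.eventually_dist_le hC ht htb).frequently
    (isBoundedUnder_ge_dist y)

theorem exists_FH_lt_and_dist_mem_Ioo (hC : ∀ p, C ≤ f p) (ht : 0 < t) {δ : ℝ}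
    (hδ : 0 < δ) :
    ∃ y, FH f t x y < ft f t x + δ ∧
      dist x y ∈ Set.Ioo (Dminus f t x - δ) (Dplus f t x + δ) := by
  obtain ⟨y, hy⟩ := exists_minSeq (x := x) hC ht
  have hinf : ∀ᶠ n in atTop, Dminus f t x - δ < dist x (y n) :=
    eventually_lt_of_lt_liminf ((sub_lt_self _ hδ).trans_le (Dminus_le_liminf hC ht hy))
      (isBoundedUnder_ge_dist y)
  have hsup : ∀ᶠ n in atTop, dist x (y n) < Dplus f t x + δ :=
    eventually_lt_of_limsup_lt ((limsup_le_Dplus hC ht hy).trans_lt (lt_add_of_pos_right _ hδ))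
      (hy.isBoundedUnder_le hC ht)
  obtain ⟨n, hF, hlo, hhi⟩ := ((hy.eventually_FH_lt hδ).and (hinf.and hsup)).exists
  exact ⟨y n, hF, hlo, hhi⟩

theorem ft_add_sq_mul_le_of_frequently (hC : ∀ p, C ≤ f p) (ht : 0 < t) (hts : t ≤ s)
    {y : ℕ → X} (hy : MinSeq f t x y) {ℓ : ℝ} (hℓ0 : 0 ≤ ℓ)
    (hℓ : ∃ᶠ n in atTop, ℓ ≤ dist x (y n)) :
    ft f s x + ℓ ^ 2 * (1 / (2 * t) - 1 / (2 * s)) ≤ ft f t x := by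
  have hc : 0 ≤ 1 / (2 * t) - 1 / (2 * s) :=
    sub_nonneg.2 (one_div_le_one_div_of_le (by positivity) (by linarith))
  refine ge_of_tendsto_of_frequently hy (hℓ.mono fun n hn => ?_)
  calc ft f s x + ℓ ^ 2 * (1 / (2 * t) - 1 / (2 * s))
      ≤ FH f s x (y n) + dist x (y n) ^ 2 * (1 / (2 * t) - 1 / (2 * s)) := by
        gcongr
        exact ft_le_FH hC (ht.trans_le hts) _
    _ = FH f t x (y n) := (FH_eq_FH_add t s (y n)).symm

theorem ft_le_add_sq_mul_of_frequently (hC : ∀ p, C ≤ f p) (ht : 0 < t) (hts : t ≤ s)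
    {y : ℕ → X} (hy : MinSeq f s x y) {ℓ : ℝ}
    (hℓ : ∃ᶠ n in atTop, dist x (y n) ≤ ℓ) :
    ft f t x ≤ ft f s x + ℓ ^ 2 * (1 / (2 * t) - 1 / (2 * s)) := by
  have hc : 0 ≤ 1 / (2 * t) - 1 / (2 * s) :=
    sub_nonneg.2 (one_div_le_one_div_of_le (by positivity) (by linarith))
  refine ge_of_tendsto_of_frequently (hy.add_const _) (hℓ.mono fun n hn => ?_)
  calc ft f t x ≤ FH f t x (y n) := ft_le_FH hC ht _
    _ = FH f s x (y n) + dist x (y n) ^ 2 * (1 / (2 * t) - 1 / (2 * s)) := FH_eq_FH_add t s _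
    _ ≤ FH f s x (y n) + ℓ ^ 2 * (1 / (2 * t) - 1 / (2 * s)) := by gcongr

theorem ft_add_sq_Dplus_mul_le (hC : ∀ p, C ≤ f p) (ht : 0 < t) (hts : t ≤ s) :
    ft f s x + Dplus f t x ^ 2 * (1 / (2 * t) - 1 / (2 * s)) ≤ ft f t x := by
  have hbound : ∀ ℓ, 0 ≤ ℓ → ℓ < Dplus f t x →
      ft f s x + ℓ ^ 2 * (1 / (2 * t) - 1 / (2 * s)) ≤ ft f t x := fun ℓ hℓ0 hℓ => by
    obtain ⟨y, hy, hlt⟩ := exists_lt_limsup_of_lt_Dplus hC ht hℓ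
    refine ft_add_sq_mul_le_of_frequently hC ht hts hy hℓ0 (.mono ?_ fun _ => le_of_lt)
    exact frequently_lt_of_lt_limsup (isBoundedUnder_ge_dist y).isCoboundedUnder_le hlt
  rcases (Dplus_nonneg (x := x) hC ht).eq_or_lt with hzero | hpos
  · obtain ⟨y, hy⟩ := exists_minSeq (x := x) hC ht
    rw [← hzero]
    exact ft_add_sq_mul_le_of_frequently hC ht hts hy le_rfl (.of_forall fun _ => dist_nonneg)
  · refine le_of_tendsto (((by fun_prop : Continuous fun ℓ : ℝ =>
      ft f s x + ℓ ^ 2 * (1 / (2 * t) - 1 / (2 * s))).tendsto _).mono_left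
        (nhdsWithin_le_nhds (s := Set.Iio (Dplus f t x)))) ?_
    filter_upwards [Ioo_mem_nhdsLT hpos] with ℓ hℓ using hbound ℓ hℓ.1.le hℓ.2

theorem ft_le_add_sq_Dminus_mul (hC : ∀ p, C ≤ f p) (ht : 0 < t) (hts : t ≤ s) :
    ft f t x ≤ ft f s x + Dminus f s x ^ 2 * (1 / (2 * t) - 1 / (2 * s)) := by
  have hs := ht.trans_le hts
  refine ge_of_tendsto (((by fun_prop : Continuous fun ℓ : ℝ =>
    ft f s x + ℓ ^ 2 * (1 / (2 * t) - 1 / (2 * s))).tendsto _).mono_left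
      (nhdsWithin_le_nhds (s := Set.Ioi (Dminus f s x)))) ?_
  filter_upwards [self_mem_nhdsWithin] with ℓ (hℓ : Dminus f s x < ℓ)
  obtain ⟨y, hy, hlt⟩ := exists_liminf_lt_of_Dminus_lt hC hs hℓ
  refine ft_le_add_sq_mul_of_frequently hC ht hts hy (.mono ?_ fun _ => le_of_lt)
  exact frequently_lt_of_liminf_lt (hy.isBoundedUnder_le hC hs).isCoboundedUnder_ge hlt

theorem slope_ft_le (hC : ∀ p, C ≤ f p) (ht : 0 < t) (hts : t < s) :
    slope (fun r => ft f r x) t s ≤ -(Dplus f t x ^ 2 / (2 * t * s)) := by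
  have h := ft_add_sq_Dplus_mul_le (x := x) hC ht hts.le
  rw [one_div_two_mul_sub ht (ht.trans hts)] at h
  rw [slope_def_field, div_le_iff₀ (sub_pos.2 hts)]
  calc ft f s x - ft f t x ≤ -(Dplus f t x ^ 2 * ((s - t) / (2 * t * s))) := by linarith
    _ = -(Dplus f t x ^ 2 / (2 * t * s)) * (s - t) := by ring

theorem neg_sq_Dminus_div_le_slope_ft (hC : ∀ p, C ≤ f p) (ht : 0 < t) (hts : t < s) :
    -(Dminus f s x ^ 2 / (2 * t * s)) ≤ slope (fun r => ft f r x) t s := by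
  have h := ft_le_add_sq_Dminus_mul (x := x) hC ht hts.le
  rw [one_div_two_mul_sub ht (ht.trans hts)] at h
  rw [slope_def_field, le_div_iff₀ (sub_pos.2 hts)]
  calc -(Dminus f s x ^ 2 / (2 * t * s)) * (s - t)
      = -(Dminus f s x ^ 2 * ((s - t) / (2 * t * s))) := by ring
    _ ≤ ft f s x - ft f t x := by linarith

theorem abs_slope_ft_le (hC : ∀ p, C ≤ f p) {a : ℝ} (ha : 0 < a) (hat : a ≤ t)
    (hts : t < s) (hsb : s ≤ b) :
    |slope (fun r => ft f r x) t s| ≤ 2 * b * (f (x, x) + 1 - C) / (2 * a ^ 2) := by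
  have ht := ha.trans_le hat
  have hs := ht.trans hts
  have hK : 0 ≤ 2 * b * (f (x, x) + 1 - C) := by nlinarith [hC (x, x)]
  rw [abs_le]
  constructor
  · calc -(2 * b * (f (x, x) + 1 - C) / (2 * a ^ 2))
        ≤ -(Dminus f s x ^ 2 / (2 * t * s)) := by
          rw [neg_le_neg_iff]
          exact div_le_div₀ hK (sq_Dminus_le hC hs hsb) (by positivity) (by nlinarith)
      _ ≤ _ := neg_sq_Dminus_div_le_slope_ft hC ht hts
  · calc slope (fun r => ft f r x) t s ≤ -(Dplus f t x ^ 2 / (2 * t * s)) :=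
          slope_ft_le hC ht hts
      _ ≤ 0 := neg_nonpos.2 (by positivity)
      _ ≤ _ := by positivity

theorem lipschitzOnWith_ft (hC : ∀ p, C ≤ f p) {a : ℝ} (ha : 0 < a) :
    LipschitzOnWith (2 * b * (f (x, x) + 1 - C) / (2 * a ^ 2)).toNNReal
      (fun t => ft f t x) (Set.Icc a b) :=
  lipschitzOnWith_of_abs_slope_le fun _ ht _ hs hts =>
    (abs_slope_ft_le hC ha ht.1 hts hs.2).trans (Real.le_coe_toNNReal _)

theorem concaveOn_ft_sub_mul_sq (hC : ∀ p, C ≤ f p) {a : ℝ} (ha : 0 < a) :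
    ConcaveOn ℝ (Set.Icc a b)
      (fun t => ft f t x - 2 * b * (f (x, x) + 1 - C) / (2 * a ^ 3) * t ^ 2) := by
  set K := 2 * b * (f (x, x) + 1 - C) / (2 * a ^ 3)
  refine ⟨convex_Icc a b, fun p hp q hq α β hα hβ hαβ => ?_⟩
  simp only [smul_eq_mul]
  refine le_of_forall_pos_le_add fun ε hε => ?_
  have hr : α * p + β * q ∈ Set.Icc a b := convex_Icc a b hp hq hα hβ hαβ
  set r := α * p + β * q
  obtain ⟨y, hy⟩ := exists_FH_lt (f := f) (x := x) (ha.trans_le hr.1) (lt_min hε one_pos)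
  have hd : dist x y ^ 2 ≤ 2 * a ^ 3 * K := by
    have : 2 * a ^ 3 * K = 2 * b * (f (x, x) + 1 - C) := by unfold K; field_simp
    rw [this]
    exact sq_dist_le_of_FH_le hC (ha.trans_le hr.1) hr.2
      (hy.le.trans (by gcongr; exact min_le_right _ _))
  have hconc := (concaveOn_div_sub_mul_sq ha (sq_nonneg _) hd).2 hp.1 hq.1 hα hβ hαβ
  simp only [smul_eq_mul] at hconc
  calc α * (ft f p x - K * p ^ 2) + β * (ft f q x - K * q ^ 2)
      ≤ α * (FH f p x y - K * p ^ 2) + β * (FH f q x y - K * q ^ 2) := by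
        gcongr
        · exact ft_le_FH hC (ha.trans_le hp.1) y
        · exact ft_le_FH hC (ha.trans_le hq.1) y
    _ = f (x, y) + (α * (dist x y ^ 2 / (2 * p) - K * p ^ 2)
          + β * (dist x y ^ 2 / (2 * q) - K * q ^ 2)) := by
        unfold FH
        linear_combination f (x, y) * hαβ
    _ ≤ f (x, y) + (dist x y ^ 2 / (2 * r) - K * r ^ 2) := by gcongr
    _ = FH f r x y - K * r ^ 2 := by unfold FH; ring
    _ ≤ ft f r x - K * r ^ 2 + ε := by linarith [min_le_left ε 1]

theorem continuousAt_ft (hC : ∀ p, C ≤ f p) (ht : 0 < t) :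
    ContinuousAt (fun t => ft f t x) t :=
  (lipschitzOnWith_ft (b := t + 1) hC (half_pos ht)).continuousOn.continuousAt
    (Icc_mem_nhds (half_lt_self ht) (lt_add_one t))

theorem tendsto_ft_nhdsGT_zero (hC : ∀ p, C ≤ f p) (hlsc : LowerSemicontinuous f) :
    Tendsto (fun t => ft f t x) (𝓝[>] 0) (𝓝 (f (x, x))) := by
  refine tendsto_order.2 ⟨fun a ha => ?_, fun a ha => ?_⟩
  · obtain ⟨a', haa', ha'⟩ := exists_between ha
    obtain ⟨δ, hδ, hball⟩ := Metric.eventually_nhds_iff.1 (hlsc (x, x) a' ha')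
    have hsmall : Tendsto (fun t => 2 * t * (f (x, x) + 1 - C)) (𝓝[>] 0) (𝓝 0) :=
      ((by fun_prop : Continuous fun t : ℝ => 2 * t * (f (x, x) + 1 - C)).tendsto' 0 0
        (by simp)).mono_left nhdsWithin_le_nhds
    filter_upwards [self_mem_nhdsWithin, hsmall.eventually (gt_mem_nhds (pow_pos hδ 2))]
      with t (ht : 0 < t) htδ
    obtain ⟨y, hy⟩ := exists_FH_lt (f := f) (x := x) ht (lt_min (sub_pos.2 haa') one_pos)
    have hd := sq_dist_le_of_FH_le hC ht le_rfl (hy.le.trans (by gcongr; exact min_le_right _ _))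
    have hfy : a' < f (x, y) := hball <| by
      rw [Prod.dist_eq, dist_self, max_eq_right dist_nonneg, dist_comm]
      exact lt_of_pow_lt_pow_left₀ 2 hδ.le (hd.trans_lt htδ)
    have : 0 ≤ dist x y ^ 2 / (2 * t) := by positivity
    unfold FH at hy
    linarith [min_le_left (a' - a) 1]
  · filter_upwards [self_mem_nhdsWithin] with t (ht : 0 < t) using (ft_le_diag hC ht).trans_lt ha

theorem continuousOn_ft (hC : ∀ p, C ≤ f p) (hlsc : LowerSemicontinuous f) :
    ContinuousOn (fun t => ft f t x) (Set.Ici 0) := by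
  intro t ht
  rcases (Set.mem_Ici.1 ht).eq_or_lt with rfl | hpos
  · have h0 : ft f 0 x = f (x, x) := if_pos rfl
    rw [← continuousWithinAt_Ioi_iff_Ici, ContinuousWithinAt, h0]
    exact tendsto_ft_nhdsGT_zero hC hlsc
  · exact (continuousAt_ft hC hpos).continuousWithinAt

theorem minSeq_of_tendsto (hC : ∀ p, C ≤ f p) (ht : 0 < t) {s δ : ℕ → ℝ}
    (hs : ∀ k, 0 < s k) (hst : Tendsto s atTop (𝓝 t)) (hδ : Tendsto δ atTop (𝓝 0))
    {z : ℕ → X} (hz : ∀ k, FH f (s k) x (z k) ≤ ft f (s k) x + δ k) : MinSeq f t x z := by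
  set K := 2 * (t + 1) * (f (x, x) + 1 - C)
  have hbound : ∀ᶠ k in atTop,
      FH f t x (z k) ≤ ft f (s k) x + δ k + K * |1 / (2 * t) - 1 / (2 * s k)| := by
    filter_upwards [hst.eventually (gt_mem_nhds (lt_add_one t)),
      hδ.eventually (gt_mem_nhds one_pos)] with k hsk hδk
    have hd := sq_dist_le_of_FH_le hC (hs k) hsk.le ((hz k).trans (by linarith))
    rw [FH_eq_FH_add t (s k)]
    refine add_le_add (hz k) ((le_abs_self _).trans ?_)
    rw [abs_mul, abs_of_nonneg (sq_nonneg _)]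
    gcongr
  have hlim : Tendsto (fun k => ft f (s k) x + δ k + K * |1 / (2 * t) - 1 / (2 * s k)|)
      atTop (𝓝 (ft f t x)) := by
    have hinv : Tendsto (fun k => 1 / (2 * s k)) atTop (𝓝 (1 / (2 * t))) :=
      tendsto_const_nhds.div (tendsto_const_nhds.mul hst) (by positivity)
    have := (((continuousAt_ft (x := x) hC ht).tendsto.comp hst).add hδ).add
      (((tendsto_const_nhds (x := 1 / (2 * t))).sub hinv).abs.const_mul K)
    rwa [sub_self, abs_zero, mul_zero, add_zero, add_zero] at this
  exact tendsto_of_tendsto_of_tendsto_of_le_of_le' tendsto_const_nhds hlim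
    (.of_forall fun k => ft_le_FH hC ht _) hbound

theorem eventually_Dminus_lt (hC : ∀ p, C ≤ f p) (ht : 0 < t) {a : ℝ} (ha : Dplus f t x < a) :
    ∀ᶠ s in 𝓝 t, Dminus f s x < a := by
  by_contra hne
  obtain ⟨s, hst, hs⟩ :=
    exists_seq_forall_of_frequently ((not_eventually.1 hne).and_eventually (lt_mem_nhds ht))
  choose z hzF hzdist using fun k =>
    exists_FH_lt_and_dist_mem_Ioo (x := x) hC (hs k).2 (Nat.one_div_pos_of_nat (n := k))
  have hz : MinSeq f t x z := minSeq_of_tendsto hC ht (fun k => (hs k).2) hst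
    tendsto_one_div_add_atTop_nhds_zero_nat fun k => (hzF k).le
  obtain ⟨a', hDa', ha'a⟩ := exists_between ha
  have hfar : ∀ᶠ k in atTop, a' < dist x (z k) := by
    filter_upwards [tendsto_one_div_add_atTop_nhds_zero_nat.eventually
      (gt_mem_nhds (sub_pos.2 ha'a))] with k hk
    linarith [not_lt.1 (hs k).1, (hzdist k).1]
  have hnear := eventually_lt_of_limsup_lt ((limsup_le_Dplus hC ht hz).trans_lt hDa')
    (hz.isBoundedUnder_le hC ht)
  obtain ⟨k, hfar, hnear⟩ := (hfar.and hnear).exists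
  exact lt_asymm hfar hnear

theorem eventually_lt_Dplus (hC : ∀ p, C ≤ f p) (ht : 0 < t) {a : ℝ} (ha : a < Dminus f t x) :
    ∀ᶠ s in 𝓝 t, a < Dplus f s x := by
  by_contra hne
  obtain ⟨s, hst, hs⟩ :=
    exists_seq_forall_of_frequently ((not_eventually.1 hne).and_eventually (lt_mem_nhds ht))
  choose z hzF hzdist using fun k =>
    exists_FH_lt_and_dist_mem_Ioo (x := x) hC (hs k).2 (Nat.one_div_pos_of_nat (n := k))
  have hz : MinSeq f t x z := minSeq_of_tendsto hC ht (fun k => (hs k).2) hst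
    tendsto_one_div_add_atTop_nhds_zero_nat fun k => (hzF k).le
  obtain ⟨a', haa', ha'D⟩ := exists_between ha
  have hnear : ∀ᶠ k in atTop, dist x (z k) < a' := by
    filter_upwards [tendsto_one_div_add_atTop_nhds_zero_nat.eventually
      (gt_mem_nhds (sub_pos.2 haa'))] with k hk
    linarith [not_lt.1 (hs k).1, (hzdist k).2]
  have hfar := eventually_lt_of_lt_liminf (ha'D.trans_le (Dminus_le_liminf hC ht hz))
    (isBoundedUnder_ge_dist z)
  obtain ⟨k, hnear, hfar⟩ := (hnear.and hfar).exists
  exact lt_asymm hfar hnear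

theorem hasDerivWithinAt_ft_Ici (hC : ∀ p, C ≤ f p) (ht : 0 < t) :
    HasDerivWithinAt (fun s => ft f s x) (-(Dplus f t x ^ 2 / (2 * t ^ 2))) (Set.Ici t) t := by
  rw [hasDerivWithinAt_iff_tendsto_slope, Set.Ici_sdiff_left]
  have hmax : Tendsto (fun s => max (Dminus f s x) (Dplus f t x)) (𝓝[>] t)
      (𝓝 (Dplus f t x)) := by
    refine (tendsto_order.2 ⟨fun a ha => .of_forall fun s => ha.trans_le (le_max_right _ _),
      fun a ha => ?_⟩).mono_left nhdsWithin_le_nhds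
    exact (eventually_Dminus_lt hC ht ha).mono fun s hs => max_lt hs ha
  refine tendsto_of_tendsto_of_tendsto_of_le_of_le'
    (tendsto_neg_sq_div_two_mul nhdsWithin_le_nhds ht.ne' hmax)
    (tendsto_neg_sq_div_two_mul nhdsWithin_le_nhds ht.ne' tendsto_const_nhds) ?_ ?_
  · filter_upwards [self_mem_nhdsWithin] with s (hts : t < s)
    have hs := ht.trans hts
    calc -(max (Dminus f s x) (Dplus f t x) ^ 2 / (2 * t * s))
        ≤ -(Dminus f s x ^ 2 / (2 * t * s)) := by
          gcongr
          exacts [Dminus_nonneg hC hs, le_max_left _ _]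
      _ ≤ _ := neg_sq_Dminus_div_le_slope_ft hC ht hts
  · filter_upwards [self_mem_nhdsWithin] with s hts using slope_ft_le hC ht hts

theorem hasDerivWithinAt_ft_Iic (hC : ∀ p, C ≤ f p) (ht : 0 < t) :
    HasDerivWithinAt (fun s => ft f s x) (-(Dminus f t x ^ 2 / (2 * t ^ 2))) (Set.Iic t) t := by
  rw [hasDerivWithinAt_iff_tendsto_slope, Set.Iic_sdiff_right]
  have hmin : Tendsto (fun s => min (Dplus f s x) (Dminus f t x)) (𝓝[<] t)
      (𝓝 (Dminus f t x)) := by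
    refine (tendsto_order.2 ⟨fun a ha => ?_,
      fun a ha => .of_forall fun s => (min_le_right _ _).trans_lt ha⟩).mono_left
        nhdsWithin_le_nhds
    exact (eventually_lt_Dplus hC ht ha).mono fun s hs => lt_min hs ha
  refine tendsto_of_tendsto_of_tendsto_of_le_of_le'
    (tendsto_neg_sq_div_two_mul nhdsWithin_le_nhds ht.ne' tendsto_const_nhds)
    (tendsto_neg_sq_div_two_mul nhdsWithin_le_nhds ht.ne' hmin) ?_ ?_
  · filter_upwards [self_mem_nhdsWithin, nhdsWithin_le_nhds (lt_mem_nhds ht)]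
      with s (hst : s < t) hs
    rw [slope_comm, mul_right_comm]
    exact neg_sq_Dminus_div_le_slope_ft hC hs hst
  · filter_upwards [self_mem_nhdsWithin, nhdsWithin_le_nhds (lt_mem_nhds ht)]
      with s (hst : s < t) hs
    rw [slope_comm]
    calc slope (fun r => ft f r x) s t ≤ -(Dplus f s x ^ 2 / (2 * s * t)) := slope_ft_le hC hs hst
      _ ≤ -(min (Dplus f s x) (Dminus f t x) ^ 2 / (2 * t * s)) := by
        rw [mul_right_comm]
        gcongr
        exacts [le_min (Dplus_nonneg hC hs) (Dminus_nonneg hC ht), min_le_left _ _]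

end HopfLax

theorem statement0
    (f : X × X → ℝ) (hlsc : LowerSemicontinuous f)
    (hbdd : ∃ C : ℝ, ∀ p : X × X, C ≤ f p) (x : X) :
    ContinuousOn (fun t => ft f t x) (Set.Ici 0) ∧
    (∀ a b : ℝ, 0 < a → a ≤ b →
      ∃ L : ℝ≥0, LipschitzOnWith L (fun t => ft f t x) (Set.Icc a b)) ∧
    (∀ a b : ℝ, 0 < a → a ≤ b →
      ∃ C : ℝ, 0 ≤ C ∧ ConcaveOn ℝ (Set.Icc a b) (fun t => ft f t x - C * t ^ 2)) ∧
    (∀ t : ℝ, 0 < t →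
      HasDerivWithinAt (fun s => ft f s x)
        (-(Dminus f t x ^ 2 / (2 * t ^ 2))) (Set.Iic t) t ∧
      HasDerivWithinAt (fun s => ft f s x)
        (-(Dplus f t x ^ 2 / (2 * t ^ 2))) (Set.Ici t) t) := by
  obtain ⟨C, hC⟩ := hbdd
  refine ⟨continuousOn_ft hC hlsc, fun a b ha _ => ⟨_, lipschitzOnWith_ft hC ha⟩,
    fun a b ha hab => ⟨_, ?_, concaveOn_ft_sub_mul_sq hC ha⟩,
    fun t ht => ⟨hasDerivWithinAt_ft_Iic hC ht, hasDerivWithinAt_ft_Ici hC ht⟩⟩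
  exact div_nonneg (mul_nonneg (by linarith) (by linarith [hC (x, x)])) (by positivity)
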